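/- Let L be a function from n×n complex matrices to the real numbers satisfying: (i) 0 ≤ L(M) ≤ L(N) whenever 0 ≤ M ≤ N in the Loewner order; (ii) |L(M*N)|² ≤ L(M*M)·L(N*N) for all M, N; and (iii) L(UMV) = L(M) for all M and all unitaries U, V. Let A, B be positive definite n×n complex matrices and X an n×n complex matrix such that the block matrix [[A, X], [X*, B]] is PPT. Then L(|X|) ≤ L(A # B). -/

import Mathlib

open Matrix ComplexOrder
open scoped Classical

namespace Matrix.PosSemidef

/-- The square root of a positive semidefinite matrix, as in the older Mathlib
(removed from current Mathlib). -/
noncomputable def sqrt {𝕜 : Type*} [RCLike 𝕜] {m : Type*} [Fintype m] [DecidableEq m]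
    {A : Matrix m m 𝕜} (hA : A.PosSemidef) : Matrix m m 𝕜 :=
  hA.1.eigenvectorUnitary.1 * diagonal ((↑) ∘ (√·) ∘ hA.1.eigenvalues) *
  (star hA.1.eigenvectorUnitary : Matrix m m 𝕜)

lemma posSemidef_sqrt {𝕜 : Type*} [RCLike 𝕜] {m : Type*} [Fintype m] [DecidableEq m]
    {A : Matrix m m 𝕜} (hA : A.PosSemidef) : PosSemidef hA.sqrt := by
  unfold sqrt
  apply PosSemidef.mul_mul_conjTranspose_same
  refine posSemidef_diagonal_iff.mpr fun i ↦ ?_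
  rw [Function.comp_apply, RCLike.nonneg_iff]
  constructor
  · simp only [RCLike.ofReal_re]
    exact Real.sqrt_nonneg _
  · simp only [RCLike.ofReal_im]

end Matrix.PosSemidef

/-- The geometric mean `P # Q = P^{1/2} (P^{-1/2} Q P^{-1/2})^{1/2} P^{1/2}` of two
positive definite complex matrices (junk value `0` if `P` or `Q` is not positive definite). -/
noncomputable def geomMean {n : ℕ} (P Q : Matrix (Fin n) (Fin n) ℂ) :
    Matrix (Fin n) (Fin n) ℂ :=
  if h : P.PosDef ∧ Q.PosDef then
    have hs : ((h.1.posSemidef.sqrt⁻¹) * Q * (h.1.posSemidef.sqrt⁻¹)).PosSemidef := by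
      have h1 := h.2.posSemidef.conjTranspose_mul_mul_same (h.1.posSemidef.sqrt⁻¹)
      rwa [Matrix.conjTranspose_nonsing_inv, h.1.posSemidef.posSemidef_sqrt.1.eq] at h1
    h.1.posSemidef.sqrt * hs.sqrt * h.1.posSemidef.sqrt
  else 0

/-- The absolute value `|X| = (XᴴX)^{1/2}` of a complex matrix. -/
noncomputable def mAbs {n : ℕ} (X : Matrix (Fin n) (Fin n) ℂ) :
    Matrix (Fin n) (Fin n) ℂ :=
  (Matrix.posSemidef_conjTranspose_mul_self X).sqrt

namespace Matrix.PosSemidef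

open scoped MatrixOrder in
lemma sqrt_eq_cfc {n : ℕ} {A : Matrix (Fin n) (Fin n) ℂ} (hA : A.PosSemidef) :
    hA.sqrt = CFC.sqrt A := by
  have h0 : (0 : Matrix (Fin n) (Fin n) ℂ) ≤ A := hA.nonneg
  rw [CFC.sqrt_eq_real_sqrt A h0, cfcₙ_eq_cfc, Matrix.IsHermitian.cfc_eq hA.1]
  simp only [Matrix.IsHermitian.cfc, Unitary.conjStarAlgAut_apply, sqrt]

open scoped MatrixOrder in
lemma sqrt_mul_self {n : ℕ} {A : Matrix (Fin n) (Fin n) ℂ} (hA : A.PosSemidef) :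
    hA.sqrt * hA.sqrt = A := by
  rw [sqrt_eq_cfc]
  exact CFC.sqrt_mul_sqrt_self A hA.nonneg

open scoped MatrixOrder in
lemma eq_sqrt_of_sq_eq {n : ℕ} {A : Matrix (Fin n) (Fin n) ℂ} (hA : A.PosSemidef)
    {B : Matrix (Fin n) (Fin n) ℂ} (hB : B.PosSemidef) (h : A ^ 2 = B) : A = hB.sqrt := by
  rw [sqrt_eq_cfc]
  exact (CFC.sqrt_unique (by rw [← sq]; exact h) hA.nonneg).symm

end Matrix.PosSemidef

namespace PPTaux

variable {n : ℕ}

noncomputable def n2 (v : Fin n → ℂ) : ℝ := ∑ i, Complex.normSq (v i)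

lemma n2_nonneg (v : Fin n → ℂ) : 0 ≤ n2 v :=
  Finset.sum_nonneg fun i _ => Complex.normSq_nonneg _

lemma star_dot_self (v : Fin n → ℂ) : star v ⬝ᵥ v = ((n2 v : ℝ) : ℂ) := by
  simp only [dotProduct, Pi.star_apply, n2]
  push_cast
  refine Finset.sum_congr rfl fun i _ => ?_
  rw [Complex.star_def, mul_comm, Complex.mul_conj]

lemma n2_eq_zero {v : Fin n → ℂ} (h : n2 v = 0) : v = 0 := by
  have := (Finset.sum_eq_zero_iff_of_nonneg (fun i _ => Complex.normSq_nonneg (v i))).1 h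
  funext i
  exact Complex.normSq_eq_zero.1 (this i (Finset.mem_univ i))

lemma n2_pos {v : Fin n → ℂ} (h : v ≠ 0) : 0 < n2 v := by
  rcases lt_or_eq_of_le (n2_nonneg v) with h' | h'
  · exact h'
  · exact absurd (n2_eq_zero h'.symm) h

lemma n2_real_smul (r : ℝ) (v : Fin n → ℂ) : n2 (r • v) = r ^ 2 * n2 v := by
  simp only [n2, Pi.smul_apply, Finset.mul_sum]
  refine Finset.sum_congr rfl fun i _ => ?_
  rw [show r • v i = (r : ℂ) * v i from rfl, Complex.normSq_mul, Complex.normSq_ofReal, sq]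

/-- M is a (euclidean) contraction -/
def Con (M : Matrix (Fin n) (Fin n) ℂ) : Prop := ∀ v, n2 (M *ᵥ v) ≤ n2 v

lemma con_of_psd {M : Matrix (Fin n) (Fin n) ℂ} (h : (1 - Mᴴ * M).PosSemidef) : Con M := by
  intro v
  have h0 := h.dotProduct_mulVec_nonneg v
  have : star v ⬝ᵥ (1 - Mᴴ * M) *ᵥ v = ((n2 v : ℝ) : ℂ) - ((n2 (M *ᵥ v) : ℝ) : ℂ) := by
    rw [Matrix.sub_mulVec, dotProduct_sub, Matrix.one_mulVec, star_dot_self,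
      ← Matrix.mulVec_mulVec, Matrix.dotProduct_mulVec, ← Matrix.star_mulVec,
      star_dot_self]
  rw [this, ← Complex.ofReal_sub] at h0
  have := (Complex.zero_le_real).1 h0
  linarith

lemma psd_of_con {M : Matrix (Fin n) (Fin n) ℂ} (h : Con M) : (1 - Mᴴ * M).PosSemidef := by
  refine Matrix.PosSemidef.of_dotProduct_mulVec_nonneg ?_ ?_
  · refine IsHermitian.sub ?_ (Matrix.isHermitian_conjTranspose_mul_self M)
    exact Matrix.isHermitian_one
  · intro v
    have : star v ⬝ᵥ (1 - Mᴴ * M) *ᵥ v = ((n2 v - n2 (M *ᵥ v) : ℝ) : ℂ) := by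
      rw [Matrix.sub_mulVec, dotProduct_sub, Matrix.one_mulVec, star_dot_self,
        ← Matrix.mulVec_mulVec, Matrix.dotProduct_mulVec, ← Matrix.star_mulVec,
        star_dot_self, Complex.ofReal_sub]
    rw [this]
    exact Complex.zero_le_real.2 (by linarith [h v])

lemma cs (a b : Fin n → ℂ) :
    ‖star a ⬝ᵥ b‖ ≤ Real.sqrt (n2 a) * Real.sqrt (n2 b) := by
  set x : EuclideanSpace ℂ (Fin n) := WithLp.toLp 2 a with hx
  set y : EuclideanSpace ℂ (Fin n) := WithLp.toLp 2 b with hy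
  have h := norm_inner_le_norm (𝕜 := ℂ) x y
  rw [EuclideanSpace.inner_eq_star_dotProduct, dotProduct_comm] at h
  simp only [hx, hy, WithLp.ofLp_toLp] at h
  have hnx : ‖x‖ = Real.sqrt (n2 a) := by
    rw [EuclideanSpace.norm_eq]
    congr 1
    refine Finset.sum_congr rfl fun i _ => ?_
    simp [hx, Complex.sq_norm, n2]
  have hny : ‖y‖ = Real.sqrt (n2 b) := by
    rw [EuclideanSpace.norm_eq]
    congr 1
    refine Finset.sum_congr rfl fun i _ => ?_
    simp [hy, Complex.sq_norm, n2]
  rw [hnx, hny] at h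
  simpa using h
lemma Con.conjTranspose {M : Matrix (Fin n) (Fin n) ℂ} (h : Con M) : Con Mᴴ := by
  intro v
  set u := Mᴴ *ᵥ v with hu
  have key : ((n2 u : ℝ) : ℂ) = star (M *ᵥ u) ⬝ᵥ v := by
    rw [Matrix.star_mulVec, ← Matrix.dotProduct_mulVec, ← hu, star_dot_self]
  have h1 : n2 u ≤ Real.sqrt (n2 (M *ᵥ u)) * Real.sqrt (n2 v) := by
    have := cs (M *ᵥ u) v
    rw [← key, Complex.norm_real, Real.norm_eq_abs] at this
    exact (le_abs_self _).trans this
  have h2 : Real.sqrt (n2 (M *ᵥ u)) ≤ Real.sqrt (n2 u) := Real.sqrt_le_sqrt (h u)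
  have h3 : n2 u ≤ Real.sqrt (n2 u) * Real.sqrt (n2 v) :=
    h1.trans (mul_le_mul_of_nonneg_right h2 (Real.sqrt_nonneg _))
  have hsq : Real.sqrt (n2 u) ^ 2 = n2 u := Real.sq_sqrt (n2_nonneg u)
  have hsv : Real.sqrt (n2 v) ^ 2 = n2 v := Real.sq_sqrt (n2_nonneg v)
  nlinarith [Real.sqrt_nonneg (n2 u), Real.sqrt_nonneg (n2 v)]

lemma Con.mul {M N : Matrix (Fin n) (Fin n) ℂ} (hM : Con M) (hN : Con N) : Con (M * N) := by
  intro v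
  rw [← Matrix.mulVec_mulVec]
  exact (hM _).trans (hN v)
lemma one_sub_psd {P S Q : Matrix (Fin n) (Fin n) ℂ} (hP : P.PosSemidef)
    (hS : IsUnit S.det) (hsim : S⁻¹ * P * S = Q) (hQ : Con Q) : (1 - P).PosSemidef := by
  classical
  set μ := hP.1.eigenvalues with hμ
  have hμ1 : ∀ i, μ i ≤ 1 := by
    intro i
    set v : Fin n → ℂ := ⇑(hP.1.eigenvectorBasis i) with hv
    have hvP : P *ᵥ v = μ i • v := hP.1.mulVec_eigenvectorBasis i
    have hn2v : n2 v = 1 := by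
      have h1 : (inner (𝕜 := ℂ) (hP.1.eigenvectorBasis i) (hP.1.eigenvectorBasis i)) = 1 := by
        have := hP.1.eigenvectorBasis.orthonormal.1 i
        rw [@inner_self_eq_norm_sq_to_K ℂ, this]
        norm_num
      rw [EuclideanSpace.inner_eq_star_dotProduct] at h1
      have h2 : star v ⬝ᵥ v = 1 := by rw [dotProduct_comm]; exact h1
      rw [star_dot_self] at h2
      exact_mod_cast h2
    have hvne : v ≠ 0 := by
      intro h0
      rw [h0] at hn2v
      simp [n2] at hn2v
    set u : Fin n → ℂ := S⁻¹ *ᵥ v with hu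
    have hSu : S *ᵥ u = v := by
      rw [hu, Matrix.mulVec_mulVec, Matrix.mul_nonsing_inv _ hS, Matrix.one_mulVec]
    have hune : u ≠ 0 := by
      intro h0
      rw [h0, Matrix.mulVec_zero] at hSu
      exact hvne hSu.symm
    have hQu : Q *ᵥ u = μ i • u := by
      have e1 : Q * S⁻¹ = S⁻¹ * P := by
        rw [← hsim, Matrix.mul_assoc, Matrix.mul_nonsing_inv _ hS, Matrix.mul_one]
      rw [hu, Matrix.mulVec_mulVec, e1, ← Matrix.mulVec_mulVec, hvP, Matrix.mulVec_smul]
    have hle := hQ u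
    rw [hQu, n2_real_smul] at hle
    have hup := n2_pos hune
    have hμ0 := hP.eigenvalues_nonneg i
    by_contra hgt
    push_neg at hgt
    have h1 : (1:ℝ) < μ i ^ 2 := by nlinarith
    have h2 := mul_lt_mul_of_pos_right h1 hup
    rw [one_mul] at h2
    linarith
  have hUU : (hP.1.eigenvectorUnitary : Matrix (Fin n) (Fin n) ℂ) * star (hP.1.eigenvectorUnitary : Matrix (Fin n) (Fin n) ℂ) = 1 :=
    Matrix.mem_unitaryGroup_iff.mp (hP.1.eigenvectorUnitary).2
  have key : 1 - P = (hP.1.eigenvectorUnitary : Matrix (Fin n) (Fin n) ℂ)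
      * Matrix.diagonal (fun i => ((1 - μ i : ℝ) : ℂ))
      * star (hP.1.eigenvectorUnitary : Matrix (Fin n) (Fin n) ℂ) := by
    have spec := hP.1.spectral_theorem
    rw [Unitary.conjStarAlgAut_apply] at spec
    have hD : Matrix.diagonal (fun i => ((1 - μ i : ℝ) : ℂ))
        = 1 - Matrix.diagonal (RCLike.ofReal ∘ μ) := by
      rw [← Matrix.diagonal_one, Matrix.diagonal_sub]
      congr 1
      funext i
      simp
    rw [hD, Matrix.mul_sub, Matrix.mul_one, Matrix.sub_mul, hUU, hμ, ← spec]
  rw [key, Matrix.star_eq_conjTranspose]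
  refine Matrix.PosSemidef.mul_mul_conjTranspose_same ?_ _
  refine Matrix.PosSemidef.diagonal ?_
  intro i
  exact Complex.zero_le_real.2 (by linarith [hμ1 i])
lemma exists_unitary_polar (X : Matrix (Fin n) (Fin n) ℂ) :
    ∃ U ∈ Matrix.unitaryGroup (Fin n) ℂ, X = U * mAbs X := by
  classical
  set hXX := Matrix.posSemidef_conjTranspose_mul_self X with hhXX
  set hH : (Xᴴ * X).IsHermitian := hXX.1 with hhH
  set d := hH.eigenvalues with hd
  set b := hH.eigenvectorBasis with hb
  have hd0 : ∀ i, 0 ≤ d i := hXX.eigenvalues_nonneg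
  -- key inner-product computation
  have key : ∀ i j, star (X *ᵥ ⇑(b i)) ⬝ᵥ (X *ᵥ ⇑(b j))
      = (d j : ℂ) * (star ⇑(b i) ⬝ᵥ ⇑(b j)) := by
    intro i j
    rw [Matrix.star_mulVec, ← Matrix.dotProduct_mulVec, Matrix.mulVec_mulVec,
      hH.mulVec_eigenvectorBasis j, dotProduct_smul]
    rw [Complex.real_smul]
  have hbij : ∀ i j, star ⇑(b i) ⬝ᵥ ⇑(b j) = if i = j then 1 else 0 := by
    intro i j
    have := (orthonormal_iff_ite (𝕜 := ℂ)).1 b.orthonormal i j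
    rw [EuclideanSpace.inner_eq_star_dotProduct, dotProduct_comm] at this
    exact this
  -- the partially-defined left singular vectors
  set w : Fin n → EuclideanSpace ℂ (Fin n) :=
    fun i => (((Real.sqrt (d i))⁻¹ : ℝ) : ℂ) • ((WithLp.equiv 2 _).symm (X *ᵥ ⇑(b i))) with hw
  set s : Set (Fin n) := {i | d i ≠ 0} with hs
  have hwon : Orthonormal ℂ (s.restrict w) := by
    rw [orthonormal_iff_ite]
    intro i j
    have hval : (inner ℂ (w i.1) (w j.1) : ℂ)
        = ((Real.sqrt (d i.1) : ℂ))⁻¹ * ((Real.sqrt (d j.1) : ℂ))⁻¹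
          * ((d j.1 : ℂ) * (if i.1 = j.1 then 1 else 0)) := by
      rw [hw]
      simp only [inner_smul_left, inner_smul_right, EuclideanSpace.inner_eq_star_dotProduct,
        WithLp.equiv_symm_apply, WithLp.ofLp_toLp, Complex.ofReal_inv, map_inv₀, Complex.conj_ofReal]
      rw [dotProduct_comm, key, hbij]
      ring
    show inner ℂ (w i.1) (w j.1) = _
    rw [hval]
    by_cases hij : i = j
    · subst hij
      have hdi : d i.1 ≠ 0 := i.2
      have hdC : (d i.1 : ℂ) ≠ 0 := by exact_mod_cast hdi
      have hsq2 : (Real.sqrt (d i.1) : ℂ) * (Real.sqrt (d i.1) : ℂ) = (d i.1 : ℂ) := by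
        rw [← Complex.ofReal_mul, Real.mul_self_sqrt (hd0 i.1)]
      rw [if_pos rfl, if_pos rfl, mul_one, ← mul_inv, hsq2, inv_mul_cancel₀ hdC]
    · have hij' : i.1 ≠ j.1 := fun h => hij (Subtype.ext h)
      rw [if_neg hij', if_neg hij]
      simp
  obtain ⟨c, hc⟩ := hwon.exists_orthonormalBasis_extension_of_card_eq
    (by simp)
  set U : Matrix (Fin n) (Fin n) ℂ :=
    (EuclideanSpace.basisFun (Fin n) ℂ).toBasis.toMatrix c.toBasis with hU
  have hUmem : U ∈ Matrix.unitaryGroup (Fin n) ℂ :=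
    (EuclideanSpace.basisFun (Fin n) ℂ).toMatrix_orthonormalBasis_mem_unitary c
  have hUapp : ∀ k i, U k i = ⇑(c i) k := fun k i => rfl
  set V := hH.eigenvectorUnitary with hV
  set Sg : Matrix (Fin n) (Fin n) ℂ :=
    Matrix.diagonal (fun i => ((Real.sqrt (d i) : ℝ) : ℂ)) with hSg
  -- X * V = U * Σ
  have hXV : X * (V : Matrix (Fin n) (Fin n) ℂ) = U * Sg := by
    ext k j
    have hL : (X * (V : Matrix (Fin n) (Fin n) ℂ)) k j = (X *ᵥ ⇑(b j)) k := by
      rfl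
    have hR : (U * Sg) k j = ((Real.sqrt (d j) : ℝ) : ℂ) * ⇑(c j) k := by
      rw [hSg, Matrix.mul_diagonal, hUapp]
      ring
    rw [hL, hR]
    by_cases hdj : d j = 0
    · have hXbj : X *ᵥ ⇑(b j) = 0 := by
        apply n2_eq_zero
        have := key j j
        rw [hbij, if_pos rfl, hdj, star_dot_self] at this
        simpa using Complex.ofReal_inj.1 (by simpa using this)
      rw [hXbj, hdj]
      simp
    · have hcj : c j = w j := hc j hdj
      rw [hcj, hw]
      simp only [WithLp.equiv_symm_apply, WithLp.toLp_smul, WithLp.ofLp_toLp, PiLp.smul_apply, Pi.smul_apply, smul_eq_mul,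
        Complex.ofReal_inv]
      have hs0 : ((Real.sqrt (d j) : ℝ) : ℂ) ≠ 0 := by
        simpa using Real.sqrt_ne_zero'.2 (lt_of_le_of_ne (hd0 j) (Ne.symm hdj))
      field_simp
  -- mAbs X = V * Σ * Vᴴ
  have hVV : (V : Matrix (Fin n) (Fin n) ℂ)ᴴ * V = 1 := by
    rw [← Matrix.star_eq_conjTranspose]
    exact Matrix.mem_unitaryGroup_iff'.mp V.2
  have hVV' : (V : Matrix (Fin n) (Fin n) ℂ) * (V : Matrix (Fin n) (Fin n) ℂ)ᴴ = 1 := by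
    rw [← Matrix.star_eq_conjTranspose]
    exact Matrix.mem_unitaryGroup_iff.mp V.2
  have hSgpsd : Sg.PosSemidef := by
    refine Matrix.PosSemidef.diagonal ?_
    intro i
    exact Complex.zero_le_real.2 (Real.sqrt_nonneg _)
  have hVSV : ((V : Matrix (Fin n) (Fin n) ℂ) * Sg * (V : Matrix (Fin n) (Fin n) ℂ)ᴴ).PosSemidef :=
    hSgpsd.mul_mul_conjTranspose_same _
  have hcancel : ∀ M : Matrix (Fin n) (Fin n) ℂ,
      (V : Matrix (Fin n) (Fin n) ℂ)ᴴ * ((V : Matrix (Fin n) (Fin n) ℂ) * M) = M := by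
    intro M
    rw [← Matrix.mul_assoc, hVV, Matrix.one_mul]
  have hsq : ((V : Matrix (Fin n) (Fin n) ℂ) * Sg * (V : Matrix (Fin n) (Fin n) ℂ)ᴴ) ^ 2
      = Xᴴ * X := by
    rw [pow_two]
    have hm : (V : Matrix (Fin n) (Fin n) ℂ) * Sg * (V : Matrix (Fin n) (Fin n) ℂ)ᴴ
        * ((V : Matrix (Fin n) (Fin n) ℂ) * Sg * (V : Matrix (Fin n) (Fin n) ℂ)ᴴ)
        = (V : Matrix (Fin n) (Fin n) ℂ) * (Sg * Sg) * (V : Matrix (Fin n) (Fin n) ℂ)ᴴ := by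
      simp only [Matrix.mul_assoc]
      rw [hcancel]
    rw [hm, hSg, Matrix.diagonal_mul_diagonal]
    have hdiag : (fun i => ((Real.sqrt (d i) : ℝ) : ℂ) * ((Real.sqrt (d i) : ℝ) : ℂ))
        = RCLike.ofReal ∘ d := by
      funext i
      rw [← Complex.ofReal_mul, Real.mul_self_sqrt (hd0 i)]
      rfl
    rw [hdiag]
    have spec := hH.spectral_theorem
    rw [← Matrix.star_eq_conjTranspose, hd, hV]
    exact spec.symm
  have hAbs : mAbs X = (V : Matrix (Fin n) (Fin n) ℂ) * Sg * (V : Matrix (Fin n) (Fin n) ℂ)ᴴ :=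
    (hVSV.eq_sqrt_of_sq_eq hXX hsq).symm
  refine ⟨U * (V : Matrix (Fin n) (Fin n) ℂ)ᴴ, ?_, ?_⟩
  · rw [← Matrix.star_eq_conjTranspose]
    exact mul_mem hUmem (Unitary.star_mem V.2)
  · rw [hAbs]
    simp only [Matrix.mul_assoc]
    rw [hcancel, ← Matrix.mul_assoc, ← hXV, Matrix.mul_assoc, hVV',
      Matrix.mul_one]
lemma psd_sub_cong {M N C : Matrix (Fin n) (Fin n) ℂ} (h : (N - M).PosSemidef) :
    (Cᴴ * N * C - Cᴴ * M * C).PosSemidef := by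
  have := h.conjTranspose_mul_mul_same C
  have e : Cᴴ * (N - M) * C = Cᴴ * N * C - Cᴴ * M * C := by
    rw [Matrix.mul_sub, Matrix.sub_mul]
  rwa [e] at this

lemma posDef_of_posSemidef_isUnit_det {P : Matrix (Fin n) (Fin n) ℂ}
    (hP : P.PosSemidef) (h : IsUnit P.det) : P.PosDef := by
  refine Matrix.PosDef.of_dotProduct_mulVec_pos hP.1 fun x hx => ?_
  have hsd : IsUnit hP.sqrt.det := by
    have : hP.sqrt.det * hP.sqrt.det = P.det := by rw [← Matrix.det_mul, hP.sqrt_mul_self]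
    exact isUnit_of_mul_isUnit_left (this ▸ h)
  have hy : hP.sqrt *ᵥ x ≠ 0 := by
    intro h0
    have : hP.sqrt⁻¹ *ᵥ (hP.sqrt *ᵥ x) = x := by
      rw [Matrix.mulVec_mulVec, Matrix.nonsing_inv_mul _ hsd, Matrix.one_mulVec]
    rw [h0, Matrix.mulVec_zero] at this
    exact hx this.symm
  have e : star x ⬝ᵥ P *ᵥ x = star (hP.sqrt *ᵥ x) ⬝ᵥ (hP.sqrt *ᵥ x) := by
    rw [Matrix.star_mulVec, ← Matrix.dotProduct_mulVec, Matrix.mulVec_mulVec,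
      hP.posSemidef_sqrt.1.eq, hP.sqrt_mul_self]
  rw [e]
  rcases lt_or_eq_of_le (dotProduct_star_self_nonneg (hP.sqrt *ᵥ x)) with h' | h'
  · exact h'
  · exact absurd (dotProduct_star_self_eq_zero.1 h'.symm) hy


lemma sqrt_posDef {P : Matrix (Fin n) (Fin n) ℂ} (hP : P.PosDef) :
    (hP.posSemidef.sqrt).PosDef := by
  refine posDef_of_posSemidef_isUnit_det hP.posSemidef.posSemidef_sqrt ?_
  have hPd : IsUnit P.det := (Matrix.isUnit_iff_isUnit_det P).mp hP.isUnit
  have : hP.posSemidef.sqrt.det * hP.posSemidef.sqrt.det = P.det := by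
    rw [← Matrix.det_mul, hP.posSemidef.sqrt_mul_self]
  exact isUnit_of_mul_isUnit_left (this ▸ hPd)

lemma PosDef.isUnit_det {P : Matrix (Fin n) (Fin n) ℂ} (hP : P.PosDef) : IsUnit P.det :=
  (Matrix.isUnit_iff_isUnit_det P).mp hP.isUnit

lemma posDef_conj {B C : Matrix (Fin n) (Fin n) ℂ} (hB : B.PosDef) (hC : IsUnit C.det) :
    (Cᴴ * B * C).PosDef := by
  refine Matrix.PosDef.of_dotProduct_mulVec_pos (Matrix.isHermitian_conjTranspose_mul_mul C hB.1) fun x hx => ?_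
  have hy : C *ᵥ x ≠ 0 := by
    intro h0
    have : C⁻¹ *ᵥ (C *ᵥ x) = x := by
      rw [Matrix.mulVec_mulVec, Matrix.nonsing_inv_mul _ hC, Matrix.one_mulVec]
    rw [h0, Matrix.mulVec_zero] at this
    exact hx this.symm
  have e : star x ⬝ᵥ (Cᴴ * B * C) *ᵥ x = star (C *ᵥ x) ⬝ᵥ B *ᵥ (C *ᵥ x) := by
    rw [← Matrix.mulVec_mulVec, ← Matrix.mulVec_mulVec, Matrix.dotProduct_mulVec,
      ← Matrix.star_mulVec]
  rw [e]
  exact hB.dotProduct_mulVec_pos hy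
end PPTaux


set_option maxHeartbeats 2000000 in
theorem stmt11 {n : ℕ} (L : Matrix (Fin n) (Fin n) ℂ → ℝ)
    (h1 : ∀ M N : Matrix (Fin n) (Fin n) ℂ,
      M.PosSemidef → (N - M).PosSemidef → 0 ≤ L M ∧ L M ≤ L N)
    (h2 : ∀ M N : Matrix (Fin n) (Fin n) ℂ,
      |L (Mᴴ * N)| ^ 2 ≤ L (Mᴴ * M) * L (Nᴴ * N))
    (h3 : ∀ M U V : Matrix (Fin n) (Fin n) ℂ,
      U ∈ Matrix.unitaryGroup (Fin n) ℂ → V ∈ Matrix.unitaryGroup (Fin n) ℂ →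
      L (U * M * V) = L M)
    (A B X : Matrix (Fin n) (Fin n) ℂ) (hA : A.PosDef) (hB : B.PosDef)
    (hH : (Matrix.fromBlocks A X Xᴴ B).PosSemidef)
    (hτ : (Matrix.fromBlocks A Xᴴ X B).PosSemidef) :
    L (mAbs X) ≤ L (geomMean A B) := by
  classical
  have hAdet : IsUnit A.det := PPTaux.PosDef.isUnit_det hA
  have hBdet : IsUnit B.det := PPTaux.PosDef.isUnit_det hB
  haveI : Invertible A := A.invertibleOfIsUnitDet hAdet
  haveI : Invertible B := B.invertibleOfIsUnitDet hBdet
  -- Schur complements of the PPT condition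
  have hBXp : (B - Xᴴ * A⁻¹ * X).PosSemidef := (Matrix.PosDef.fromBlocks₁₁ X B hA).mp hH
  have hAXp : (A - Xᴴ * B⁻¹ * X).PosSemidef := by
    have hτ' : (Matrix.fromBlocks A Xᴴ (Xᴴ)ᴴ B).PosSemidef := by
      rwa [Matrix.conjTranspose_conjTranspose]
    have := (Matrix.PosDef.fromBlocks₂₂ A Xᴴ hB).mp hτ'
    rwa [Matrix.conjTranspose_conjTranspose] at this
  -- the geometric mean
  set G := geomMean A B with hG0
  set sA := hA.posSemidef.sqrt with hsA
  have hs' : ((sA⁻¹) * B * (sA⁻¹)).PosSemidef := by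
    have h1' := hB.posSemidef.conjTranspose_mul_mul_same (sA⁻¹)
    rwa [Matrix.conjTranspose_nonsing_inv, hA.posSemidef.posSemidef_sqrt.1.eq] at h1'
  set T := hs'.sqrt with hT
  have hGdef : G = sA * T * sA := by
    rw [hG0]
    unfold geomMean
    rw [dif_pos (⟨hA, hB⟩ : A.PosDef ∧ B.PosDef)]
  -- positive definiteness facts
  have hsApd : sA.PosDef := PPTaux.sqrt_posDef hA
  have hsAd : IsUnit sA.det := PPTaux.PosDef.isUnit_det hsApd
  have hsAH : sAᴴ = sA := hA.posSemidef.posSemidef_sqrt.1.eq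
  have hsAipd : (sA⁻¹).PosDef := hsApd.inv
  have hsAiH : (sA⁻¹)ᴴ = sA⁻¹ := by rw [Matrix.conjTranspose_nonsing_inv, hsAH]
  have hMidpd : (sA⁻¹ * B * sA⁻¹).PosDef := by
    have := PPTaux.posDef_conj hB (PPTaux.PosDef.isUnit_det hsAipd)
    rwa [hsAiH] at this
  have hTpd : T.PosDef := PPTaux.sqrt_posDef hMidpd
  have hGpd : G.PosDef := by
    rw [hGdef]
    have := PPTaux.posDef_conj hTpd hsAd
    rwa [hsAH] at this
  have hGpsd : G.PosSemidef := hGpd.posSemidef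
  -- cancellation rules for sA
  have a0 : sA⁻¹ * sA = 1 := Matrix.nonsing_inv_mul _ hsAd
  have a0' : sA * sA⁻¹ = 1 := Matrix.mul_nonsing_inv _ hsAd
  have cA1 : ∀ Z : Matrix (Fin n) (Fin n) ℂ, sA * (sA⁻¹ * Z) = Z := by
    intro Z; rw [← Matrix.mul_assoc, a0', Matrix.one_mul]
  have cA2 : ∀ Z : Matrix (Fin n) (Fin n) ℂ, sA⁻¹ * (sA * Z) = Z := by
    intro Z; rw [← Matrix.mul_assoc, a0, Matrix.one_mul]
  have hAinv : A⁻¹ = sA⁻¹ * sA⁻¹ := by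
    conv_lhs => rw [show A = sA * sA from (hA.posSemidef.sqrt_mul_self).symm]
    rw [Matrix.mul_inv_rev]
  have hTT : T * T = sA⁻¹ * B * sA⁻¹ := hs'.sqrt_mul_self
  have cTT : ∀ Z : Matrix (Fin n) (Fin n) ℂ, T * (T * Z) = sA⁻¹ * (B * (sA⁻¹ * Z)) := by
    intro Z
    rw [← Matrix.mul_assoc, hTT]
    simp only [Matrix.mul_assoc]
  clear_value sA T
  -- the key Riccati identity  G A⁻¹ G = B
  have hGAG : G * A⁻¹ * G = B := by
    rw [hGdef, hAinv]
    simp only [Matrix.mul_assoc, cA1, cA2, cTT, a0, Matrix.mul_one]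
  -- square root of G
  have hGdet : IsUnit G.det := PPTaux.PosDef.isUnit_det hGpd
  set sG := hGpsd.sqrt with hsGdef
  have hsGpd : sG.PosDef := PPTaux.sqrt_posDef hGpd
  have hsGd : IsUnit sG.det := PPTaux.PosDef.isUnit_det hsGpd
  have hsGH : sGᴴ = sG := hGpsd.posSemidef_sqrt.1.eq
  have hGsq : sG * sG = G := hGpsd.sqrt_mul_self
  set iG := sG⁻¹ with hiG
  have hiGpd : iG.PosDef := hsGpd.inv
  have hiGH : iGᴴ = iG := by rw [hiG, Matrix.conjTranspose_nonsing_inv, hsGH]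
  have g0 : iG * sG = 1 := Matrix.nonsing_inv_mul _ hsGd
  have g0' : sG * iG = 1 := Matrix.mul_nonsing_inv _ hsGd
  have gc1 : ∀ Z : Matrix (Fin n) (Fin n) ℂ, sG * (iG * Z) = Z := by
    intro Z; rw [← Matrix.mul_assoc, g0', Matrix.one_mul]
  have gc2 : ∀ Z : Matrix (Fin n) (Fin n) ℂ, iG * (sG * Z) = Z := by
    intro Z; rw [← Matrix.mul_assoc, g0, Matrix.one_mul]
  have hGinv : G⁻¹ = iG * iG := by
    conv_lhs => rw [show G = sG * sG from hGsq.symm]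
    rw [Matrix.mul_inv_rev]
  have hBinv : B⁻¹ = G⁻¹ * A * G⁻¹ := by
    rw [← hGAG, Matrix.mul_inv_rev, Matrix.mul_inv_rev,
      Matrix.nonsing_inv_nonsing_inv A hAdet]
    simp only [Matrix.mul_assoc]
  clear_value G sG iG
  -- congruence by G^{-1/2}
  set C := iG * A * iG with hCdef
  set K := iG * X * iG with hKdef
  have hCpd : C.PosDef := by
    have := PPTaux.posDef_conj hA (PPTaux.PosDef.isUnit_det hiGpd)
    rw [hiGH] at this
    rwa [hCdef]
  have hKH : Kᴴ = iG * Xᴴ * iG := by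
    rw [hKdef]
    simp only [Matrix.conjTranspose_mul, hiGH, Matrix.mul_assoc]
  have hCinv : C⁻¹ = sG * A⁻¹ * sG := by
    rw [hCdef, Matrix.mul_inv_rev, Matrix.mul_inv_rev, hiG,
      Matrix.nonsing_inv_nonsing_inv sG hsGd]
    simp only [Matrix.mul_assoc]
  have cond1 : (C⁻¹ - Kᴴ * C⁻¹ * K).PosSemidef := by
    have h0 := PPTaux.psd_sub_cong (C := iG) hBXp
    rw [hiGH] at h0
    have e1 : iG * B * iG = C⁻¹ := by
      rw [← hGAG, hCinv, ← hGsq]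
      simp only [Matrix.mul_assoc, gc2, g0', Matrix.mul_one]
    have e2 : iG * (Xᴴ * A⁻¹ * X) * iG = Kᴴ * C⁻¹ * K := by
      rw [hKH, hCinv, hKdef]
      simp only [Matrix.mul_assoc, gc1, gc2]
    rwa [e1, e2] at h0
  have cond2 : (C - Kᴴ * C * K).PosSemidef := by
    have h0 := PPTaux.psd_sub_cong (C := iG) hAXp
    rw [hiGH] at h0
    have e2 : iG * (Xᴴ * B⁻¹ * X) * iG = Kᴴ * C * K := by
      rw [hKH, hBinv, hGinv, hKdef, hCdef]
      simp only [Matrix.mul_assoc]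
    rwa [e2, ← hCdef] at h0
  clear_value C K
  -- square root of C
  have hCpsd : C.PosSemidef := hCpd.posSemidef
  set sC := hCpsd.sqrt with hsCdef
  have hsCpd : sC.PosDef := PPTaux.sqrt_posDef hCpd
  have hsCd : IsUnit sC.det := PPTaux.PosDef.isUnit_det hsCpd
  have hsCH : sCᴴ = sC := hCpsd.posSemidef_sqrt.1.eq
  have hCsq : sC * sC = C := hCpsd.sqrt_mul_self
  set iC := sC⁻¹ with hiC
  have hiCH : iCᴴ = iC := by rw [hiC, Matrix.conjTranspose_nonsing_inv, hsCH]
  have s0 : iC * sC = 1 := Matrix.nonsing_inv_mul _ hsCd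
  have s0' : sC * iC = 1 := Matrix.mul_nonsing_inv _ hsCd
  have sc1 : ∀ Z : Matrix (Fin n) (Fin n) ℂ, sC * (iC * Z) = Z := by
    intro Z; rw [← Matrix.mul_assoc, s0', Matrix.one_mul]
  have sc2 : ∀ Z : Matrix (Fin n) (Fin n) ℂ, iC * (sC * Z) = Z := by
    intro Z; rw [← Matrix.mul_assoc, s0, Matrix.one_mul]
  have hCinv2 : C⁻¹ = iC * iC := by
    conv_lhs => rw [show C = sC * sC from hCsq.symm]
    rw [Matrix.mul_inv_rev]
  clear_value sC iC
  -- the two contractions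
  have hZH : (sC * K * iC)ᴴ = iC * Kᴴ * sC := by
    simp only [Matrix.conjTranspose_mul, hiCH, hsCH, Matrix.mul_assoc]
  have hWH : (iC * K * sC)ᴴ = sC * Kᴴ * iC := by
    simp only [Matrix.conjTranspose_mul, hiCH, hsCH, Matrix.mul_assoc]
  have hZpsd : (1 - (sC * K * iC)ᴴ * (sC * K * iC)).PosSemidef := by
    have h0 := PPTaux.psd_sub_cong (C := iC) cond2
    rw [hiCH] at h0
    have e1 : iC * C * iC = 1 := by
      rw [← hCsq]
      simp only [Matrix.mul_assoc, sc2, s0']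
    have e2 : iC * (Kᴴ * C * K) * iC = (sC * K * iC)ᴴ * (sC * K * iC) := by
      rw [hZH, ← hCsq]
      simp only [Matrix.mul_assoc]
    rwa [e1, e2] at h0
  have hWpsd : (1 - (iC * K * sC)ᴴ * (iC * K * sC)).PosSemidef := by
    have h0 := PPTaux.psd_sub_cong (C := sC) cond1
    rw [hsCH] at h0
    have e1 : sC * C⁻¹ * sC = 1 := by
      rw [hCinv2]
      simp only [Matrix.mul_assoc, sc1, s0]
    have e2 : sC * (Kᴴ * C⁻¹ * K) * sC = (iC * K * sC)ᴴ * (iC * K * sC) := by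
      rw [hWH, hCinv2]
      simp only [Matrix.mul_assoc]
    rwa [e1, e2] at h0
  have conZ : PPTaux.Con (sC * K * iC) := PPTaux.con_of_psd hZpsd
  have conW : PPTaux.Con (iC * K * sC) := PPTaux.con_of_psd hWpsd
  have conQ : PPTaux.Con ((sC * K * iC)ᴴ * (iC * K * sC)) := conZ.conjTranspose.mul conW
  have hsim : sC⁻¹ * (Kᴴ * K) * sC = (sC * K * iC)ᴴ * (iC * K * sC) := by
    rw [hZH, ← hiC]
    simp only [Matrix.mul_assoc, sc1]
  have hKK : (1 - Kᴴ * K).PosSemidef :=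
    PPTaux.one_sub_psd (Matrix.posSemidef_conjTranspose_mul_self K) hsCd hsim conQ
  -- putting everything together
  have hXeq : sGᴴ * (K * sG) = X := by
    rw [hsGH, hKdef]
    simp only [Matrix.mul_assoc, gc1, g0, Matrix.mul_one]
  have hGeq : sGᴴ * sG = G := by rw [hsGH, hGsq]
  have hNNpsd := Matrix.posSemidef_conjTranspose_mul_self (K * sG)
  have hGNN : (G - (K * sG)ᴴ * (K * sG)).PosSemidef := by
    have h0 := PPTaux.psd_sub_cong (C := sG) hKK
    rw [hsGH] at h0
    have e1 : sG * 1 * sG = G := by rw [Matrix.mul_one, hGsq]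
    have e2 : sG * (Kᴴ * K) * sG = (K * sG)ᴴ * (K * sG) := by
      simp only [Matrix.conjTranspose_mul, hsGH, Matrix.mul_assoc]
    rwa [e1, e2] at h0
  have hLNN := h1 ((K * sG)ᴴ * (K * sG)) G hNNpsd hGNN
  have hLG0 : 0 ≤ L G :=
    (h1 G G hGpsd (by rw [sub_self]; exact Matrix.PosSemidef.zero)).1
  have hCS := h2 sG (K * sG)
  rw [hXeq, hGeq] at hCS
  have hLXsq : |L X| ^ 2 ≤ L G * L G :=
    hCS.trans (mul_le_mul_of_nonneg_left hLNN.2 hLG0)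
  obtain ⟨Up, hUpmem, hXUp⟩ := PPTaux.exists_unitary_polar X
  have hLeq : L X = L (mAbs X) := by
    have := h3 (mAbs X) Up 1 hUpmem (one_mem _)
    rw [Matrix.mul_one, ← hXUp] at this
    exact this
  have habs0 : 0 ≤ L (mAbs X) :=
    (h1 (mAbs X) (mAbs X) (Matrix.posSemidef_conjTranspose_mul_self X).posSemidef_sqrt
      (by rw [sub_self]; exact Matrix.PosSemidef.zero)).1
  have habsX : |L X| = L X := abs_of_nonneg (hLeq ▸ habs0)
  rw [← hLeq]
  nlinarith [hLXsq, hLG0, habsX]
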